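/- For every monic irreducible polynomial $\pi \in A$, the polynomial $X$ divides $\rho_{\pi}(X)$ in $A[X]$, and the quotient $\rho_{\pi}(X)/X$ is a polynomial with coefficients in $A$ that is irreducible over the fraction field $K = \mathbb{F}_q(T)$. -/

import Mathlib

/-!
Write `c_k(a)` for the coefficient of `X ^ q ^ k` in `ρ_a`. Every `ρ_a` is `𝔽_q`-linear: only
the monomials `X ^ q ^ k` with `k ≤ deg a` occur, `c_0(a) = a`, and `c_{deg a}(a)` is the
leading coefficient of `a`. Comparing coefficients in
`ρ_T ∘ ρ_a = ρ_a ∘ ρ_T` gives `c_{i+1}(a) (T ^ q ^ (i+1) - T) = c_i(a) ^ q - c_i(a)`. For `π`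
irreducible of degree `d` and `0 < j < d`, `π` does not divide `T ^ q ^ j - T`, so by induction
`π` divides `c_i(π)` for all `i < d`. Hence `ρ_π / X` is monic with constant term `π` and all
other lower coefficients divisible by `π`: it is Eisenstein at `π`, and Gauss's lemma transfers
irreducibility to `K`.
-/

open Polynomial

namespace Polynomial

section Linearized

variable {R : Type*} [CommRing R]

def IsLinearized (q : ℕ) (f : R[X]) : Prop := ∀ n, f.coeff n ≠ 0 → ∃ k, q ^ k = n

variable {q : ℕ} {f g : R[X]}

theorem IsLinearized.add (hf : IsLinearized q f) (hg : IsLinearized q g) :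
    IsLinearized q (f + g) := fun n hn => by
  by_cases hfn : f.coeff n = 0
  · exact hg n (by simpa [hfn] using hn)
  · exact hf n hfn

theorem IsLinearized.C_mul (hf : IsLinearized q f) (r : R) : IsLinearized q (C r * f) :=
  fun n hn => hf n (right_ne_zero_of_mul (coeff_C_mul f ▸ hn))

theorem isLinearized_C_mul_X (r : R) : IsLinearized q (C r * X) := fun n hn =>
  ⟨0, by
    rw [coeff_C_mul_X] at hn
    split_ifs at hn with h
    · rw [h, pow_zero]
    · exact absurd rfl hn⟩

theorem IsLinearized.coeff_zero (hf : IsLinearized q f) (hq : q ≠ 0) : f.coeff 0 = 0 := by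
  by_contra h
  obtain ⟨k, hk⟩ := hf 0 h
  exact pow_ne_zero k hq hk

end Linearized

section FiniteFieldAlgebra

variable {Fq R : Type*} [Field Fq] [Fintype Fq] [CommRing R] [Algebra Fq R]

local notation "q" => Fintype.card Fq

theorem add_pow_card_pow (x y : R) (k : ℕ) : (x + y) ^ q ^ k = x ^ q ^ k + y ^ q ^ k := by
  induction k with
  | zero => simp
  | succ k ih =>
    simp only [pow_succ, pow_mul, ih, ← FiniteField.frobeniusAlgHom_apply (K := Fq), map_add]

theorem pow_card_eq_expand_map (f : R[X]) :
    f ^ q = expand R q (f.map (FiniteField.frobeniusAlgHom Fq R : R →+* R)) := by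
  have : ((FiniteField.frobeniusAlgHom Fq R[X] : R[X] →+* R[X])) =
      (expand R q : R[X] →+* R[X]).comp (mapRingHom (FiniteField.frobeniusAlgHom Fq R)) := by
    ext <;> simp
  exact RingHom.congr_fun this f

theorem coeff_pow_card_mul (f : R[X]) (n : ℕ) : (f ^ q).coeff (q * n) = f.coeff n ^ q := by
  rw [pow_card_eq_expand_map, coeff_expand_mul' Fintype.card_pos, coeff_map]
  rfl

theorem coeff_pow_card_of_not_dvd (f : R[X]) {n : ℕ} (hn : ¬ q ∣ n) : (f ^ q).coeff n = 0 := by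
  rw [pow_card_eq_expand_map, coeff_expand Fintype.card_pos, if_neg hn]

theorem IsLinearized.pow_card {f : R[X]} (hf : IsLinearized q f) : IsLinearized q (f ^ q) := by
  intro n hn
  obtain ⟨m, rfl⟩ : q ∣ n := by
    by_contra h
    exact hn (coeff_pow_card_of_not_dvd f h)
  rw [coeff_pow_card_mul] at hn
  obtain ⟨k, rfl⟩ := hf m (ne_zero_pow Fintype.card_ne_zero hn)
  exact ⟨k + 1, pow_succ' _ _⟩

theorem IsLinearized.comp_add {f : R[X]} (hf : IsLinearized q f) (g h : R[X]) :
    f.comp (g + h) = f.comp g + f.comp h := by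
  simp only [comp_eq_sum_left, Polynomial.sum, ← Finset.sum_add_distrib, ← mul_add]
  refine Finset.sum_congr rfl fun n hn => ?_
  obtain ⟨k, rfl⟩ := hf n (mem_support_iff.mp hn)
  rw [add_pow_card_pow]

end FiniteFieldAlgebra

theorem Monic.irreducible_map_fraction_map_of_eisenstein {R K : Type*} [CommRing R] [IsDomain R]
    [IsIntegrallyClosed R] [Field K] [Algebra R K] [IsFractionRing R K] {f : R[X]} {π : R}
    (hf : f.Monic) (hπ : Prime π) (hdeg : 0 < f.natDegree)
    (hdvd : ∀ n < f.natDegree, π ∣ f.coeff n) (h0 : ¬ π ^ 2 ∣ f.coeff 0) :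
    Irreducible (f.map (algebraMap R K)) := by
  have hEis : f.IsEisensteinAt (Ideal.span {π}) := by
    refine ⟨?_, fun hn => Ideal.mem_span_singleton.mpr (hdvd _ hn), ?_⟩
    · rw [hf.leadingCoeff, Ideal.mem_span_singleton]
      exact hπ.not_dvd_one
    · rwa [Ideal.span_singleton_pow, Ideal.mem_span_singleton]
  refine (hf.irreducible_iff_irreducible_map_fraction_map).mp ?_
  exact hEis.irreducible ((Ideal.span_singleton_prime hπ.ne_zero).mpr hπ) hf.isPrimitive hdeg

end Polynomial

section Carlitz

variable {Fq : Type*} [Field Fq] [Fintype Fq] {ρ : Fq[X] → Fq[X][X]}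

local notation "q" => Fintype.card Fq

theorem carlitz_X_mul (hρT : ρ X = C X * X + X ^ q)
    (hρmul : ∀ a b, ρ (a * b) = (ρ a).comp (ρ b)) (a : Fq[X]) :
    ρ (X * a) = C X * ρ a + ρ a ^ q := by
  rw [hρmul, hρT, add_comp, mul_comp, C_comp, X_comp, pow_comp, X_comp]

theorem isLinearized_carlitz (hρC : ∀ c : Fq, ρ (C c) = C (C c) * X)
    (hρT : ρ X = C X * X + X ^ q) (hρadd : ∀ a b, ρ (a + b) = ρ a + ρ b)
    (hρmul : ∀ a b, ρ (a * b) = (ρ a).comp (ρ b)) (a : Fq[X]) :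
    IsLinearized q (ρ a) := by
  induction a using Polynomial.induction_on with
  | C c => exact hρC c ▸ isLinearized_C_mul_X _
  | add a b ha hb => exact hρadd a b ▸ ha.add hb
  | monomial n c ih =>
    rw [pow_succ', mul_left_comm, carlitz_X_mul hρT hρmul]
    exact (ih.C_mul _).add ih.pow_card

theorem carlitz_coeff_one (hρC : ∀ c : Fq, ρ (C c) = C (C c) * X)
    (hρT : ρ X = C X * X + X ^ q) (hρadd : ∀ a b, ρ (a + b) = ρ a + ρ b)
    (hρmul : ∀ a b, ρ (a * b) = (ρ a).comp (ρ b)) (a : Fq[X]) :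
    (ρ a).coeff 1 = a := by
  induction a using Polynomial.induction_on with
  | C c => rw [hρC, coeff_C_mul_X, if_pos rfl]
  | add a b ha hb => rw [hρadd, coeff_add, ha, hb]
  | monomial n c ih =>
    have hq : ¬ q ∣ 1 := Nat.not_dvd_of_pos_of_lt one_pos Fintype.one_lt_card
    rw [pow_succ', mul_left_comm, carlitz_X_mul hρT hρmul, coeff_add, coeff_C_mul, ih,
      coeff_pow_card_of_not_dvd _ hq, add_zero]

theorem carlitz_natDegree_leadingCoeff (hρC : ∀ c : Fq, ρ (C c) = C (C c) * X)
    (hρT : ρ X = C X * X + X ^ q) (hρadd : ∀ a b, ρ (a + b) = ρ a + ρ b)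
    (hρmul : ∀ a b, ρ (a * b) = (ρ a).comp (ρ b)) {a : Fq[X]} (ha : a ≠ 0) :
    (ρ a).natDegree = q ^ a.natDegree ∧ (ρ a).leadingCoeff = C a.leadingCoeff := by
  have hq : 1 < q := Fintype.one_lt_card
  induction a using Polynomial.recOnHorner with
  | M0 => exact absurd rfl ha
  | MC p c hp0 hc ih =>
    rcases eq_or_ne p 0 with rfl | hp
    · rw [zero_add, hρC, natDegree_C_mul_X _ (C_ne_zero.mpr hc), leadingCoeff_C_mul_X,
        natDegree_C, leadingCoeff_C, pow_zero]
      exact ⟨rfl, rfl⟩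
    obtain ⟨hdeg, hlc⟩ := ih hp
    have hp1 : 0 < p.natDegree := by
      by_contra h
      exact hp (by rw [eq_C_of_natDegree_eq_zero (Nat.eq_zero_of_not_pos h), hp0, C_0])
    have hlt : (C (C c) * X).natDegree < (ρ p).natDegree := by
      rw [natDegree_C_mul_X _ (C_ne_zero.mpr hc), hdeg]
      exact Nat.one_lt_pow hp1.ne' hq
    rw [hρadd, hρC, natDegree_add_eq_left_of_natDegree_lt hlt,
      leadingCoeff_add_of_degree_lt' (degree_lt_degree hlt), natDegree_add_C,
      leadingCoeff_add_of_degree_lt' (degree_C_le.trans_lt (natDegree_pos_iff_degree_pos.mp hp1))]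
    exact ⟨hdeg, hlc⟩
  | MX p hp ih =>
    obtain ⟨hdeg, hlc⟩ := ih hp
    have hlt : (C X * ρ p).natDegree < (ρ p ^ q).natDegree := by
      rw [natDegree_pow, hdeg, ← pow_succ']
      exact (natDegree_C_mul_le _ _).trans_lt (hdeg ▸ Nat.pow_lt_pow_succ hq)
    rw [natDegree_mul_X hp, leadingCoeff_mul_X, mul_comm p X, carlitz_X_mul hρT hρmul,
      natDegree_add_eq_right_of_natDegree_lt hlt,
      leadingCoeff_add_of_degree_lt (degree_lt_degree hlt), natDegree_pow, leadingCoeff_pow,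
      hdeg, hlc, ← C_pow, FiniteField.pow_card, pow_succ']
    exact ⟨rfl, rfl⟩

theorem carlitz_coeff_recurrence (hρC : ∀ c : Fq, ρ (C c) = C (C c) * X)
    (hρT : ρ X = C X * X + X ^ q) (hρadd : ∀ a b, ρ (a + b) = ρ a + ρ b)
    (hρmul : ∀ a b, ρ (a * b) = (ρ a).comp (ρ b)) (a : Fq[X]) (i : ℕ) :
    (ρ a).coeff (q ^ (i + 1)) * (X ^ q ^ (i + 1) - X) =
      (ρ a).coeff (q ^ i) ^ q - (ρ a).coeff (q ^ i) := by
  -- compare the coefficients of `X ^ q ^ (i + 1)` in `ρ (X * a) = ρ (a * X)`; the right side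
  -- splits because `ρ a` is additive
  have hcomm : C X * ρ a + ρ a ^ q = (ρ a).comp (C X * X) + expand _ q (ρ a) := by
    rw [← carlitz_X_mul hρT hρmul, mul_comm, hρmul, hρT,
      (isLinearized_carlitz hρC hρT hρadd hρmul a).comp_add, expand_eq_comp_X_pow]
  have := congrArg (coeff · (q * q ^ i)) hcomm
  simp only [coeff_add, coeff_C_mul, comp_C_mul_X_coeff] at this
  rw [coeff_pow_card_mul, coeff_expand_mul' Fintype.card_pos, ← pow_succ'] at this
  linear_combination -this

theorem dvd_carlitz_coeff (hρC : ∀ c : Fq, ρ (C c) = C (C c) * X)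
    (hρT : ρ X = C X * X + X ^ q) (hρadd : ∀ a b, ρ (a + b) = ρ a + ρ b)
    (hρmul : ∀ a b, ρ (a * b) = (ρ a).comp (ρ b)) {π a : Fq[X]} (hπ : Irreducible π)
    (ha : π ∣ a) {i : ℕ} (hi : i < π.natDegree) : π ∣ (ρ a).coeff (q ^ i) := by
  induction i with
  | zero => rwa [pow_zero, carlitz_coeff_one hρC hρT hρadd hρmul]
  | succ i ih =>
    have hci := ih (by omega)
    have hdvd : π ∣ (ρ a).coeff (q ^ (i + 1)) * (X ^ q ^ (i + 1) - X) := by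
      rw [carlitz_coeff_recurrence hρC hρT hρadd hρmul]
      exact dvd_sub (dvd_pow hci Fintype.card_ne_zero) hci
    refine (hπ.prime.dvd_or_dvd hdvd).resolve_right fun h => ?_
    rw [← Nat.card_eq_fintype_card] at h
    exact Nat.not_dvd_of_pos_of_lt i.succ_pos hi (hπ.natDegree_dvd_of_dvd_X_pow_card_pow_sub_X h)

theorem dvd_carlitz_coeff_of_lt (hρC : ∀ c : Fq, ρ (C c) = C (C c) * X)
    (hρT : ρ X = C X * X + X ^ q) (hρadd : ∀ a b, ρ (a + b) = ρ a + ρ b)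
    (hρmul : ∀ a b, ρ (a * b) = (ρ a).comp (ρ b)) {π a : Fq[X]} (hπ : Irreducible π)
    (ha : π ∣ a) {n : ℕ} (hn : n < q ^ π.natDegree) : π ∣ (ρ a).coeff n := by
  by_cases h : (ρ a).coeff n = 0
  · rw [h]
    exact dvd_zero π
  obtain ⟨i, rfl⟩ := isLinearized_carlitz hρC hρT hρadd hρmul a n h
  exact dvd_carlitz_coeff hρC hρT hρadd hρmul hπ ha
    ((Nat.pow_lt_pow_iff_right Fintype.one_lt_card).mp hn)

end Carlitz

/-- Let `A = 𝔽_q[T]` and let `ρ : A → A[X]` be the Carlitz module, determined by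
`ρ_c(X) = cX` for constants `c`, `ρ_T(X) = TX + X^q`, additivity, and `ρ_{ab} = ρ_a ∘ ρ_b`.
For every monic irreducible `π ∈ A`, the polynomial `X` divides `ρ_π(X)` in `A[X]`, and the
quotient `ρ_π(X)/X` has coefficients in `A` and is irreducible over the fraction field
`K = 𝔽_q(T)`. -/
theorem carlitz_div_X_irreducible
    (Fq : Type) [Field Fq] [Fintype Fq]
    (ρ : Polynomial Fq → Polynomial (Polynomial Fq))
    (hρC : ∀ c : Fq, ρ (Polynomial.C c) = Polynomial.C (Polynomial.C c) * Polynomial.X)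
    (hρT : ρ Polynomial.X =
      Polynomial.C Polynomial.X * Polynomial.X + Polynomial.X ^ Fintype.card Fq)
    (hρadd : ∀ a b : Polynomial Fq, ρ (a + b) = ρ a + ρ b)
    (hρmul : ∀ a b : Polynomial Fq, ρ (a * b) = (ρ a).comp (ρ b))
    (π : Polynomial Fq) (hπmonic : π.Monic) (hπirr : Irreducible π) :
    ∃ Q : Polynomial (Polynomial Fq),
      ρ π = Polynomial.X * Q ∧
      Irreducible (Q.map (algebraMap (Polynomial Fq) (FractionRing (Polynomial Fq)))) := by
  obtain ⟨hdeg, hlc⟩ := carlitz_natDegree_leadingCoeff hρC hρT hρadd hρmul hπirr.ne_zero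
  have hmonic : (ρ π).Monic := by rw [Monic, hlc, hπmonic.leadingCoeff, C_1]
  obtain ⟨Q, hQ⟩ : X ∣ ρ π :=
    X_dvd_iff.mpr ((isLinearized_carlitz hρC hρT hρadd hρmul π).coeff_zero Fintype.card_ne_zero)
  have hQmonic : Q.Monic := monic_X.of_mul_monic_left (hQ ▸ hmonic)
  have hQdeg : Q.natDegree + 1 = Fintype.card Fq ^ π.natDegree := by
    rw [← natDegree_X_mul hQmonic.ne_zero, ← hQ, hdeg]
  have hπ2 : ¬ π ^ 2 ∣ π := by
    intro h
    have := (pow_dvd_pow_iff (n := 2) (m := 1) hπirr.ne_zero hπirr.not_isUnit).mp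
      (by rwa [pow_one])
    omega
  refine ⟨Q, hQ, hQmonic.irreducible_map_fraction_map_of_eisenstein hπirr.prime ?_ ?_ ?_⟩
  · have := Nat.one_lt_pow hπirr.natDegree_pos.ne' (Fintype.one_lt_card (α := Fq))
    omega
  · intro n hn
    rw [← coeff_X_mul, ← hQ]
    exact dvd_carlitz_coeff_of_lt hρC hρT hρadd hρmul hπirr dvd_rfl (by omega)
  · rwa [← coeff_X_mul, ← hQ, zero_add, carlitz_coeff_one hρC hρT hρadd hρmul]
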